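/- arXiv:1802.03916 — 6 statements merged into one kernel-verified Lean document; each statement's English description precedes it below -/
import Mathlib

section
/- Under the label shift assumption and assuming p(y) > 0 for all y, the target distribution of predictions satisfies the moment-matching identity μ_ŷ = C w, i.e., for every label i: Q(f⁻¹(i) × {1,…,k}) = Σ_{j=1}^{k} P(f⁻¹(i) × {j}) · (q(j)/p(j)). -/
open MeasureTheory ProbabilityTheory Filter Matrix

noncomputable section

/-- Population confusion matrix: `C i j = P (f⁻¹(i) × {j})`. -/
def confusion {X : Type*} [MeasurableSpace X] {k : ℕ}
    (P : Measure (X × Fin k)) (f : X → Fin k) : Matrix (Fin k) (Fin k) ℝ :=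
  fun i j => (P ((f ⁻¹' {i}) ×ˢ ({j} : Set (Fin k)))).toReal

/-- Under label shift with `p(y) > 0` for all `y`, the target prediction
marginal satisfies the moment-matching identity `μ_ŷ = C w`. -/
theorem label_shift_moment_matching
    {X : Type*} [MeasurableSpace X] {k : ℕ} (hk : 1 ≤ k)
    (P Q : Measure (X × Fin k)) [IsProbabilityMeasure P] [IsProbabilityMeasure Q]
    (f : X → Fin k) (hf : Measurable f)
    (A1 : ∀ (y : Fin k) (A : Set X), MeasurableSet A →
      P (A ×ˢ ({y} : Set (Fin k))) * Q (Set.univ ×ˢ ({y} : Set (Fin k)))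
        = Q (A ×ˢ ({y} : Set (Fin k))) * P (Set.univ ×ˢ ({y} : Set (Fin k))))
    (A2 : ∀ y : Fin k, 0 < (P (Set.univ ×ˢ ({y} : Set (Fin k)))).toReal) :
    ∀ i : Fin k,
      (Q ((f ⁻¹' {i}) ×ˢ (Set.univ : Set (Fin k)))).toReal
        = ∑ j : Fin k, confusion P f i j * ((Q (Set.univ ×ˢ ({j} : Set (Fin k)))).toReal / (P (Set.univ ×ˢ ({j} : Set (Fin k)))).toReal) := by
  intro i
  have hA : MeasurableSet (f ⁻¹' {i}) := hf (measurableSet_singleton i)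
  -- split univ into singletons
  have hsplit : (f ⁻¹' {i}) ×ˢ (Set.univ : Set (Fin k))
      = ⋃ j : Fin k, (f ⁻¹' {i}) ×ˢ ({j} : Set (Fin k)) := by
    ext ⟨x, y⟩
    simp only [Set.mem_prod, Set.mem_preimage, Set.mem_singleton_iff, Set.mem_univ, and_true,
      Set.mem_iUnion]
    exact ⟨fun h => ⟨y, h, rfl⟩, fun ⟨_, h, hy⟩ => h⟩
  have hdisj : Pairwise (Function.onFun Disjoint
      fun j : Fin k => (f ⁻¹' {i}) ×ˢ ({j} : Set (Fin k)))  := by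
    intro a b hab
    simp only [Function.onFun, Set.disjoint_left]
    rintro ⟨x, y⟩ ⟨-, hy⟩ ⟨-, hy'⟩
    exact hab (by simpa using (hy.symm.trans hy'))
  have hmeas : ∀ j : Fin k, MeasurableSet ((f ⁻¹' {i}) ×ˢ ({j} : Set (Fin k))) :=
    fun j => hA.prod (measurableSet_singleton j)
  have hsum : Q ((f ⁻¹' {i}) ×ˢ (Set.univ : Set (Fin k)))
      = ∑ j : Fin k, Q ((f ⁻¹' {i}) ×ˢ ({j} : Set (Fin k))) := by
    rw [hsplit, measure_iUnion hdisj hmeas, tsum_fintype]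
  rw [hsum, ENNReal.toReal_sum (fun j _ => measure_ne_top Q _)]
  refine Finset.sum_congr rfl fun j _ => ?_
  have hfin : ∀ (μ : Measure (X × Fin k)) [IsProbabilityMeasure μ] (s : Set (X × Fin k)),
      μ s ≠ ⊤ := fun μ _ s => measure_ne_top μ s
  have h1 := A1 j (f ⁻¹' {i}) hA
  have hreal : (P ((f ⁻¹' {i}) ×ˢ ({j} : Set (Fin k)))).toReal
        * (Q (Set.univ ×ˢ ({j} : Set (Fin k)))).toReal
      = (Q ((f ⁻¹' {i}) ×ˢ ({j} : Set (Fin k)))).toReal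
        * (P (Set.univ ×ˢ ({j} : Set (Fin k)))).toReal := by
    rw [← ENNReal.toReal_mul, ← ENNReal.toReal_mul, h1]
  have hp : (P (Set.univ ×ˢ ({j} : Set (Fin k)))).toReal ≠ 0 := ne_of_gt (A2 j)
  rw [confusion, ← mul_div_assoc, eq_div_iff hp]
  linarith [hreal]

end
end

section
/- Under the label shift assumption with p(y) > 0 for all y, if the confusion matrix C is invertible, then the importance weight vector is exactly recovered as w = C⁻¹ μ_ŷ; in particular, w is the unique vector v ∈ ℝ^k satisfying μ_ŷ = C v. -/
open MeasureTheory ProbabilityTheory Filter Matrix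

noncomputable section

/-!
Label shift says that `P` and `Q` have the same class-conditional distributions, so
`Q (A × {j}) = P (A × {j}) * w j` for every measurable `A`. Taking `A = f⁻¹(i)` and summing over
the labels `j` gives `μ_ŷ = C w`, and invertibility of `C` turns this linear system into the
formula `w = C⁻¹ μ_ŷ` and its uniqueness.
-/

section LabelShift

variable {X ι : Type*} [MeasurableSpace X] [MeasurableSpace ι]

theorem measure_prod_univ_eq_sum_prod_singleton [Fintype ι] [MeasurableSingletonClass ι]
    (μ : Measure (X × ι)) {A : Set X} (hA : MeasurableSet A) :
    μ (A ×ˢ Set.univ) = ∑ j, μ (A ×ˢ {j}) := by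
  have hdisj : Pairwise (Function.onFun Disjoint fun j : ι => A ×ˢ {j}) := fun i j hij =>
    Set.disjoint_prod.2 (Or.inr (Set.disjoint_singleton.2 hij))
  rw [← Set.iUnion_of_singleton ι, Set.prod_iUnion,
    measure_iUnion hdisj fun j => hA.prod (measurableSet_singleton j), tsum_fintype]

/-- The importance weight `w` of the paper. -/
def labelWeight (P Q : Measure (X × ι)) (j : ι) : ℝ :=
  (Q (Set.univ ×ˢ {j})).toReal / (P (Set.univ ×ˢ {j})).toReal

theorem toReal_measure_prod_singleton_eq_mul_labelWeight {P Q : Measure (X × ι)} {A : Set X}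
    {y : ι} (hshift : P (A ×ˢ {y}) * Q (Set.univ ×ˢ {y}) = Q (A ×ˢ {y}) * P (Set.univ ×ˢ {y}))
    (hp : 0 < (P (Set.univ ×ˢ {y})).toReal) :
    (Q (A ×ˢ {y})).toReal = (P (A ×ˢ {y})).toReal * labelWeight P Q y := by
  have h := congrArg ENNReal.toReal hshift
  rw [ENNReal.toReal_mul, ENNReal.toReal_mul] at h
  rw [labelWeight, ← mul_div_assoc, eq_div_iff hp.ne', h]

end LabelShift

section ConfusionSystem

variable {X : Type*} [MeasurableSpace X] {k : ℕ}

/-- The vector `μ_ŷ` of the paper: the distribution of the predicted labels under `Q`. -/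
def predictedMarginal (Q : Measure (X × Fin k)) (f : X → Fin k) (i : Fin k) : ℝ :=
  (Q ((f ⁻¹' {i}) ×ˢ Set.univ)).toReal

theorem predictedMarginal_eq_confusion_mulVec_labelWeight {P Q : Measure (X × Fin k)}
    [IsFiniteMeasure Q] {f : X → Fin k} (hf : Measurable f)
    (hshift : ∀ (y : Fin k) (A : Set X), MeasurableSet A →
      P (A ×ˢ {y}) * Q (Set.univ ×ˢ {y}) = Q (A ×ˢ {y}) * P (Set.univ ×ˢ {y}))
    (hp : ∀ y, 0 < (P (Set.univ ×ˢ {y})).toReal) :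
    predictedMarginal Q f = confusion P f *ᵥ labelWeight P Q := by
  funext i
  have hAi : MeasurableSet (f ⁻¹' {i}) := hf (measurableSet_singleton i)
  rw [predictedMarginal, measure_prod_univ_eq_sum_prod_singleton Q hAi,
    ENNReal.toReal_sum fun j _ => measure_ne_top Q _]
  exact Finset.sum_congr rfl fun j _ =>
    toReal_measure_prod_singleton_eq_mul_labelWeight (hshift j _ hAi) (hp j)

end ConfusionSystem

theorem label_shift_exact_recovery_general
    {X : Type*} [MeasurableSpace X] {k : ℕ}
    (P Q : Measure (X × Fin k)) [IsProbabilityMeasure Q]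
    (f : X → Fin k) (hf : Measurable f)
    (A1 : ∀ (y : Fin k) (A : Set X), MeasurableSet A →
      P (A ×ˢ ({y} : Set (Fin k))) * Q (Set.univ ×ˢ ({y} : Set (Fin k)))
        = Q (A ×ˢ ({y} : Set (Fin k))) * P (Set.univ ×ˢ ({y} : Set (Fin k))))
    (A2 : ∀ y : Fin k, 0 < (P (Set.univ ×ˢ ({y} : Set (Fin k)))).toReal)
    (A3 : IsUnit (confusion P f).det) :
    (confusion P f)⁻¹ *ᵥ (fun i => (Q ((f ⁻¹' {i}) ×ˢ (Set.univ : Set (Fin k)))).toReal)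
        = (fun j => (Q (Set.univ ×ˢ ({j} : Set (Fin k)))).toReal / (P (Set.univ ×ˢ ({j} : Set (Fin k)))).toReal) ∧
      ∀ v : Fin k → ℝ,
        (fun i => (Q ((f ⁻¹' {i}) ×ˢ (Set.univ : Set (Fin k)))).toReal)
            = (confusion P f) *ᵥ v →
          v = (fun j => (Q (Set.univ ×ˢ ({j} : Set (Fin k)))).toReal / (P (Set.univ ×ˢ ({j} : Set (Fin k)))).toReal) := by
  have hmu : predictedMarginal Q f = confusion P f *ᵥ labelWeight P Q :=
    predictedMarginal_eq_confusion_mulVec_labelWeight hf A1 A2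
  refine ⟨?_, fun v hv => mulVec_injective_of_det_ne_zero A3.ne_zero (hv.symm.trans hmu)⟩
  change (confusion P f)⁻¹ *ᵥ predictedMarginal Q f = labelWeight P Q
  rw [hmu, mulVec_mulVec, nonsing_inv_mul _ A3, one_mulVec]

/-- Under label shift with `p(y) > 0` and an invertible confusion matrix,
the weight vector is exactly recovered: `w = C⁻¹ μ_ŷ`, and `w` is the unique solution of
`μ_ŷ = C v`. -/
theorem label_shift_exact_recovery
    {X : Type*} [MeasurableSpace X] {k : ℕ} (hk : 1 ≤ k)
    (P Q : Measure (X × Fin k)) [IsProbabilityMeasure P] [IsProbabilityMeasure Q]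
    (f : X → Fin k) (hf : Measurable f)
    (A1 : ∀ (y : Fin k) (A : Set X), MeasurableSet A →
      P (A ×ˢ ({y} : Set (Fin k))) * Q (Set.univ ×ˢ ({y} : Set (Fin k)))
        = Q (A ×ˢ ({y} : Set (Fin k))) * P (Set.univ ×ˢ ({y} : Set (Fin k))))
    (A2 : ∀ y : Fin k, 0 < (P (Set.univ ×ˢ ({y} : Set (Fin k)))).toReal)
    (A3 : IsUnit (confusion P f).det) :
    (confusion P f)⁻¹ *ᵥ (fun i => (Q ((f ⁻¹' {i}) ×ˢ (Set.univ : Set (Fin k)))).toReal)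
        = (fun j => (Q (Set.univ ×ˢ ({j} : Set (Fin k)))).toReal / (P (Set.univ ×ˢ ({j} : Set (Fin k)))).toReal) ∧
      ∀ v : Fin k → ℝ,
        (fun i => (Q ((f ⁻¹' {i}) ×ˢ (Set.univ : Set (Fin k)))).toReal)
            = (confusion P f) *ᵥ v →
          v = (fun j => (Q (Set.univ ×ˢ ({j} : Set (Fin k)))).toReal / (P (Set.univ ×ˢ ({j} : Set (Fin k)))).toReal) :=
  label_shift_exact_recovery_general P Q f hf A1 A2 A3

end
end

section
/- (Consistency of BBSE, Proposition 1, part 1) Assume the label shift assumption (A.1), p(y) > 0 for all y (A.2), and that the confusion matrix C is invertible (A.3). Then as n, m → ∞, the estimator ŵ (defined as Ĉ⁻¹ μ̂_ŷ whenever Ĉ is invertible, and arbitrarily otherwise) converges almost surely to w, where w_j = q(j)/p(j). -/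
/-! Under label shift, `C i j * w j = P(f = i, y = j) q(j) / p(j) = Q(f = i, y = j)`, so summing
over `j` gives `C w = μ_ŷ`, the law of `f(x')` under `Q`; hence `w = C⁻¹ μ_ŷ`. By the strong law of
large numbers every entry of `Ĉ` and `μ̂_ŷ` converges almost surely to the corresponding entry of `C`
and `μ_ŷ`. As `C` is invertible, `Ĉ` is eventually invertible and `(A, v) ↦ A⁻¹ v` is continuous at
`(C, μ_ŷ)`, so `ŵ = Ĉ⁻¹ μ̂_ŷ` converges to `w`. -/

open MeasureTheory ProbabilityTheory Filter Matrix

noncomputable section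

/-- Empirical confusion matrix from `n` samples. -/
def empConfusion {X Ω : Type*} {k : ℕ}
    (f : X → Fin k) (Z : ℕ → Ω → X × Fin k) (n : ℕ) (ω : Ω) : Matrix (Fin k) (Fin k) ℝ :=
  fun i j => ((Finset.range n).filter (fun l => f (Z l ω).1 = i ∧ (Z l ω).2 = j)).card / n

/-- Empirical prediction frequencies on the target sample. -/
def empMu {X Ω : Type*} {k : ℕ} (f : X → Fin k) (Z' : ℕ → Ω → X) (m : ℕ) (ω : Ω) :
    Fin k → ℝ :=
  fun i => ((Finset.range m).filter (fun l => f (Z' l ω) = i)).card / m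

/-- The combined family of source samples (indexed by `Sum.inl`) and target samples
(indexed by `Sum.inr`), used to state mutual independence. -/
def pairFam {X Ω : Type*} {k : ℕ} (Z : ℕ → Ω → X × Fin k) (Z' : ℕ → Ω → X) :
    (s : ℕ ⊕ ℕ) → Ω → Sum.elim (fun _ : ℕ => X × Fin k) (fun _ : ℕ => X) s
  | .inl i => Z i
  | .inr j => Z' j

/-- The measurable-space structures on the codomains of `pairFam`. -/
def pairMS {X : Type*} [MeasurableSpace X] {k : ℕ} :
    (s : ℕ ⊕ ℕ) → MeasurableSpace (Sum.elim (fun _ : ℕ => X × Fin k) (fun _ : ℕ => X) s)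
  | .inl _ => (inferInstance : MeasurableSpace (X × Fin k))
  | .inr _ => (inferInstance : MeasurableSpace X)

theorem ae_tendsto_card_filter_mem_div {Ω E : Type*} [MeasurableSpace Ω] [MeasurableSpace E]
    {μ : Measure Ω} [IsFiniteMeasure μ] {ν : Measure E} (W : ℕ → Ω → E)
    (hmeas : ∀ l, Measurable (W l)) (hlaw : ∀ l, μ.map (W l) = ν)
    (hind : Pairwise fun l l' => IndepFun (W l) (W l') μ)
    {S : Set E} (hS : MeasurableSet S) [DecidablePred (· ∈ S)] :
    ∀ᵐ ω ∂μ, Tendsto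
      (fun n : ℕ => (((Finset.range n).filter (fun l => W l ω ∈ S)).card : ℝ) / n) atTop
      (nhds (ν S).toReal) := by
  set g : E → ℝ := S.indicator 1
  have hg : Measurable g := measurable_const.indicator hS
  have hg0 : g ∘ W 0 = (W 0 ⁻¹' S).indicator 1 := by
    ext ω
    by_cases h : W 0 ω ∈ S <;> simp [g, h]
  have hint : Integrable (g ∘ W 0) μ := by
    rw [hg0]
    exact (integrable_const 1).indicator (hmeas 0 hS)
  have hident : ∀ l, IdentDistrib (g ∘ W l) (g ∘ W 0) μ μ := fun l =>
    (IdentDistrib.mk (hmeas l).aemeasurable (hmeas 0).aemeasurable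
      ((hlaw l).trans (hlaw 0).symm)).comp hg
  have hmean : μ[g ∘ W 0] = (ν S).toReal := by
    rw [hg0, integral_indicator_one (hmeas 0 hS), ← hlaw 0,
      Measure.map_apply (hmeas 0) hS]
    simp [Measure.real]
  have hslln := strong_law_ae_real (fun l => g ∘ W l) hint
    (fun l l' h => (hind h).comp hg hg) hident
  rw [hmean] at hslln
  filter_upwards [hslln] with ω hω
  simpa [g, Set.indicator_apply, Finset.sum_boole] using hω

theorem ae_tendsto_empConfusion {X Ω : Type*} [MeasurableSpace X] [MeasurableSpace Ω] {k : ℕ}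
    {μ : Measure Ω} [IsFiniteMeasure μ] {P : Measure (X × Fin k)} {f : X → Fin k}
    (hf : Measurable f) {Z : ℕ → Ω → X × Fin k} (hmeas : ∀ l, Measurable (Z l))
    (hlaw : ∀ l, μ.map (Z l) = P) (hind : Pairwise fun l l' => IndepFun (Z l) (Z l') μ) :
    ∀ᵐ ω ∂μ, Tendsto (fun n => empConfusion f Z n ω) atTop (nhds (confusion P f)) := by
  classical
  have hentry : ∀ i j, ∀ᵐ ω ∂μ,
      Tendsto (fun n => empConfusion f Z n ω i j) atTop (nhds (confusion P f i j)) :=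
    fun i j => by
      simpa [empConfusion, confusion] using ae_tendsto_card_filter_mem_div Z hmeas hlaw hind
        ((hf (measurableSet_singleton i)).prod (measurableSet_singleton j))
  filter_upwards [ae_all_iff.2 fun i => ae_all_iff.2 (hentry i)] with ω hω
  exact tendsto_pi_nhds.2 fun i => tendsto_pi_nhds.2 (hω i)

theorem ae_tendsto_empMu {X Ω : Type*} [MeasurableSpace X] [MeasurableSpace Ω] {k : ℕ}
    {μ : Measure Ω} [IsFiniteMeasure μ] {ν : Measure X} {f : X → Fin k}
    (hf : Measurable f) {Z' : ℕ → Ω → X} (hmeas : ∀ l, Measurable (Z' l))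
    (hlaw : ∀ l, μ.map (Z' l) = ν) (hind : Pairwise fun l l' => IndepFun (Z' l) (Z' l') μ) :
    ∀ᵐ ω ∂μ, Tendsto (fun m => empMu f Z' m ω) atTop
      (nhds fun i => (ν (f ⁻¹' {i})).toReal) := by
  classical
  have hentry : ∀ i, ∀ᵐ ω ∂μ,
      Tendsto (fun m => empMu f Z' m ω i) atTop (nhds (ν (f ⁻¹' {i})).toReal) :=
    fun i => by
      simpa [empMu] using ae_tendsto_card_filter_mem_div Z' hmeas hlaw hind
        (hf (measurableSet_singleton i))
  filter_upwards [ae_all_iff.2 hentry] with ω hω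
  exact tendsto_pi_nhds.2 hω

theorem measure_prod_univ_eq_sum {α Y : Type*} [MeasurableSpace α] [MeasurableSpace Y]
    [Fintype Y] [MeasurableSingletonClass Y] (Q : Measure (α × Y)) {A : Set α}
    (hA : MeasurableSet A) : Q (A ×ˢ Set.univ) = ∑ y, Q (A ×ˢ {y}) := by
  rw [← Set.iUnion_of_singleton Y, Set.prod_iUnion,
    measure_iUnion ?_ fun y => hA.prod (measurableSet_singleton y), tsum_fintype]
  exact fun y y' h => Set.disjoint_prod.2 (Or.inr (Set.disjoint_singleton.2 h))

theorem confusion_mulVec_weights {X : Type*} [MeasurableSpace X] {k : ℕ}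
    {P Q : Measure (X × Fin k)} [IsFiniteMeasure Q] {f : X → Fin k} (hf : Measurable f)
    (A1 : ∀ (y : Fin k) (A : Set X), MeasurableSet A →
      P (A ×ˢ ({y} : Set (Fin k))) * Q (Set.univ ×ˢ ({y} : Set (Fin k)))
        = Q (A ×ˢ ({y} : Set (Fin k))) * P (Set.univ ×ˢ ({y} : Set (Fin k))))
    (A2 : ∀ y : Fin k, 0 < (P (Set.univ ×ˢ ({y} : Set (Fin k)))).toReal) :
    confusion P f *ᵥ (fun j => (Q (Set.univ ×ˢ ({j} : Set (Fin k)))).toReal /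
        (P (Set.univ ×ˢ ({j} : Set (Fin k)))).toReal)
      = fun i => ((Q.map Prod.fst) (f ⁻¹' {i})).toReal := by
  funext i
  have hA : MeasurableSet (f ⁻¹' {i}) := hf (measurableSet_singleton i)
  have hterm : ∀ j, confusion P f i j * ((Q (Set.univ ×ˢ ({j} : Set (Fin k)))).toReal /
      (P (Set.univ ×ˢ ({j} : Set (Fin k)))).toReal)
        = (Q ((f ⁻¹' {i}) ×ˢ ({j} : Set (Fin k)))).toReal := by
    intro j
    rw [confusion, ← mul_div_assoc, div_eq_iff (A2 j).ne', ← ENNReal.toReal_mul,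
      ← ENNReal.toReal_mul, A1 j _ hA]
  simp only [mulVec, dotProduct, hterm]
  rw [Measure.map_apply measurable_fst hA, ← Set.prod_univ, measure_prod_univ_eq_sum Q hA,
    ENNReal.toReal_sum fun j _ => measure_ne_top Q _]

theorem Matrix.tendsto_inv_mulVec {ι 𝕜 n : Type*} [Fintype n] [DecidableEq n] [Field 𝕜]
    [TopologicalSpace 𝕜] [IsTopologicalRing 𝕜] [ContinuousInv₀ 𝕜] {l : Filter ι}
    {A : ι → Matrix n n 𝕜} {v : ι → n → 𝕜} {C : Matrix n n 𝕜} {u : n → 𝕜}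
    (hA : Tendsto A l (nhds C)) (hv : Tendsto v l (nhds u)) (hC : IsUnit C.det) :
    Tendsto (fun i => (A i)⁻¹ *ᵥ v i) l (nhds (C⁻¹ *ᵥ u)) := by
  have hinv : ContinuousAt Inv.inv C := by
    apply continuousAt_matrix_inv
    rw [Ring.inverse_eq_inv']
    exact continuousAt_inv₀ hC.ne_zero
  exact (continuous_fst.matrix_mulVec continuous_snd).continuousAt.tendsto.comp
    ((hinv.tendsto.comp hA).prodMk_nhds hv)

theorem tendsto_of_eq_inv_mulVec_of_isUnit_det {ι 𝕜 n : Type*} [Fintype n] [DecidableEq n]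
    [Field 𝕜] [TopologicalSpace 𝕜] [T1Space 𝕜] [IsTopologicalRing 𝕜] [ContinuousInv₀ 𝕜]
    {l : Filter ι} {A : ι → Matrix n n 𝕜} {v W : ι → n → 𝕜} {C : Matrix n n 𝕜} {u : n → 𝕜}
    (hA : Tendsto A l (nhds C)) (hv : Tendsto v l (nhds u)) (hC : IsUnit C.det)
    (hW : ∀ i, IsUnit (A i).det → W i = (A i)⁻¹ *ᵥ v i) :
    Tendsto W l (nhds (C⁻¹ *ᵥ u)) := by
  have hdet : ∀ᶠ i in l, (A i).det ≠ 0 :=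
    ((continuous_id.matrix_det.tendsto C).comp hA).eventually_ne hC.ne_zero
  refine (Matrix.tendsto_inv_mulVec hA hv hC).congr' ?_
  filter_upwards [hdet] with i hi
  exact (hW i (isUnit_iff_ne_zero.2 hi)).symm

theorem bbse_weights_consistent_general
    {X : Type*} [MeasurableSpace X] {k : ℕ}
    (P Q : Measure (X × Fin k)) [IsProbabilityMeasure Q]
    (f : X → Fin k) (hf : Measurable f)
    (A1 : ∀ (y : Fin k) (A : Set X), MeasurableSet A →
      P (A ×ˢ ({y} : Set (Fin k))) * Q (Set.univ ×ˢ ({y} : Set (Fin k)))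
        = Q (A ×ˢ ({y} : Set (Fin k))) * P (Set.univ ×ˢ ({y} : Set (Fin k))))
    (A2 : ∀ y : Fin k, 0 < (P (Set.univ ×ˢ ({y} : Set (Fin k)))).toReal)
    (A3 : IsUnit (confusion P f).det)
    {Ω : Type*} [MeasurableSpace Ω] (μ : Measure Ω) [IsProbabilityMeasure μ]
    (Z : ℕ → Ω → X × Fin k) (Z' : ℕ → Ω → X)
    (hZmeas : ∀ l, Measurable (Z l)) (hZ'meas : ∀ l, Measurable (Z' l))
    (hZlaw : ∀ l, μ.map (Z l) = P) (hZ'law : ∀ l, μ.map (Z' l) = Q.map Prod.fst)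
    (hindep : iIndepFun (m := pairMS (X := X) (k := k)) (pairFam Z Z') μ)
    (West : ℕ → ℕ → Ω → Fin k → ℝ)
    (hWest : ∀ (n m : ℕ) (ω : Ω), IsUnit (empConfusion f Z n ω).det →
      West n m ω = (empConfusion f Z n ω)⁻¹ *ᵥ empMu f Z' m ω) :
    ∀ᵐ ω ∂μ, Tendsto (fun nm : ℕ × ℕ => West nm.1 nm.2 ω) atTop
      (nhds (fun j => (Q (Set.univ ×ˢ ({j} : Set (Fin k)))).toReal / (P (Set.univ ×ˢ ({j} : Set (Fin k)))).toReal)) := by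
  have hindZ : Pairwise fun l l' => IndepFun (Z l) (Z l') μ := fun l l' h =>
    hindep.indepFun (Sum.inl_injective.ne h)
  have hindZ' : Pairwise fun l l' => IndepFun (Z' l) (Z' l') μ := fun l l' h =>
    hindep.indepFun (Sum.inr_injective.ne h)
  have hfst : Tendsto (Prod.fst : ℕ × ℕ → ℕ) atTop atTop := by
    rw [← prod_atTop_atTop_eq]; exact tendsto_fst
  have hsnd : Tendsto (Prod.snd : ℕ × ℕ → ℕ) atTop atTop := by
    rw [← prod_atTop_atTop_eq]; exact tendsto_snd
  filter_upwards [ae_tendsto_empConfusion hf hZmeas hZlaw hindZ,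
    ae_tendsto_empMu hf hZ'meas hZ'law hindZ'] with ω hC hmu
  rw [← confusion_mulVec_weights hf A1 A2] at hmu
  have hlim := tendsto_of_eq_inv_mulVec_of_isUnit_det (hC.comp hfst) (hmu.comp hsnd) A3
    fun nm => hWest nm.1 nm.2 ω
  rwa [mulVec_mulVec, nonsing_inv_mul _ A3, one_mulVec] at hlim

/-- Consistency of BBSE, part 1. Under label shift, positivity of the source
label marginal, and invertibility of the confusion matrix, any estimator that equals
`Ĉ⁻¹ μ̂_ŷ` whenever `Ĉ` is invertible converges almost surely to `w` as `n, m → ∞`. -/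
theorem bbse_weights_consistent
    {X : Type*} [MeasurableSpace X] {k : ℕ} (hk : 1 ≤ k)
    (P Q : Measure (X × Fin k)) [IsProbabilityMeasure P] [IsProbabilityMeasure Q]
    (f : X → Fin k) (hf : Measurable f)
    (A1 : ∀ (y : Fin k) (A : Set X), MeasurableSet A →
      P (A ×ˢ ({y} : Set (Fin k))) * Q (Set.univ ×ˢ ({y} : Set (Fin k)))
        = Q (A ×ˢ ({y} : Set (Fin k))) * P (Set.univ ×ˢ ({y} : Set (Fin k))))
    (A2 : ∀ y : Fin k, 0 < (P (Set.univ ×ˢ ({y} : Set (Fin k)))).toReal)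
    (A3 : IsUnit (confusion P f).det)
    {Ω : Type*} [MeasurableSpace Ω] (μ : Measure Ω) [IsProbabilityMeasure μ]
    (Z : ℕ → Ω → X × Fin k) (Z' : ℕ → Ω → X)
    (hZmeas : ∀ l, Measurable (Z l)) (hZ'meas : ∀ l, Measurable (Z' l))
    (hZlaw : ∀ l, μ.map (Z l) = P) (hZ'law : ∀ l, μ.map (Z' l) = Q.map Prod.fst)
    (hindep : iIndepFun (m := pairMS (X := X) (k := k)) (pairFam Z Z') μ)
    (West : ℕ → ℕ → Ω → Fin k → ℝ)
    (hWest : ∀ (n m : ℕ) (ω : Ω), IsUnit (empConfusion f Z n ω).det →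
      West n m ω = (empConfusion f Z n ω)⁻¹ *ᵥ empMu f Z' m ω) :
    ∀ᵐ ω ∂μ, Tendsto (fun nm : ℕ × ℕ => West nm.1 nm.2 ω) atTop
      (nhds (fun j => (Q (Set.univ ×ˢ ({j} : Set (Fin k)))).toReal / (P (Set.univ ×ˢ ({j} : Set (Fin k)))).toReal)) :=
  bbse_weights_consistent_general P Q f hf A1 A2 A3 μ Z Z' hZmeas hZ'meas hZlaw hZ'law hindep West
    hWest

end
end

section
/- (Consistency of BBSE, Proposition 1, part 2) Assume the label shift assumption (A.1), p(y) > 0 for all y (A.2), and that the confusion matrix C is invertible (A.3). Then as n, m → ∞, the estimator μ̂_y = diag(ν̂_y) ŵ converges almost surely to the target label marginal μ_y ∈ ℝ^k, where (μ_y)_j = q(j). -/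
/-!
By the strong law of large numbers, `Ĉ`, `μ̂_ŷ` and `ν̂_y` converge almost surely to `C`, the law
`μ_ŷ` of `f(x)` under `Q`, and `p`. Label shift gives `C w = μ_ŷ` for the importance weights
`w = q / p`, hence `q = p · C⁻¹ μ_ŷ`. Matrix inversion is continuous at the invertible `C`, so `Ĉ`
is eventually invertible and `ν̂_y · Ĉ⁻¹ μ̂_ŷ → p · C⁻¹ μ_ŷ = q`.
-/

open MeasureTheory ProbabilityTheory Filter Matrix

noncomputable section

/-- Empirical label frequencies on the source sample. -/
def empNu {X Ω : Type*} {k : ℕ} (Z : ℕ → Ω → X × Fin k) (n : ℕ) (ω : Ω) : Fin k → ℝ :=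
  fun j => ((Finset.range n).filter (fun l => (Z l ω).2 = j)).card / n

open Topology

lemma ae_tendsto_card_filter_div {α Ω : Type*} [MeasurableSpace α] [MeasurableSpace Ω]
    {μ : Measure Ω} [IsProbabilityMeasure μ] {ν : Measure α}
    {Z : ℕ → Ω → α} (hZ : ∀ l, Measurable (Z l)) (hlaw : ∀ l, μ.map (Z l) = ν)
    (hind : Pairwise fun i j => IndepFun (Z i) (Z j) μ)
    (p : α → Prop) [DecidablePred p] (hp : MeasurableSet {a | p a}) :
    ∀ᵐ ω ∂μ, Tendsto (fun n : ℕ => (((Finset.range n).filter (fun l => p (Z l ω))).card : ℝ) / n)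
      atTop (𝓝 (ν.real {a | p a})) := by
  have : IsProbabilityMeasure ν := hlaw 0 ▸ Measure.isProbabilityMeasure_map (hZ 0).aemeasurable
  set g : α → ℝ := {a | p a}.indicator 1
  have hg : Measurable g := measurable_const.indicator hp
  have hident : ∀ l, IdentDistrib (g ∘ Z l) g μ ν := fun l =>
    IdentDistrib.comp ⟨(hZ l).aemeasurable, aemeasurable_id, (hlaw l).trans Measure.map_id.symm⟩ hg
  have hint : Integrable (g ∘ Z 0) μ :=
    (hident 0).integrable_iff.2 ((integrable_const 1).indicator hp)
  have hmean : μ[g ∘ Z 0] = ν.real {a | p a} :=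
    (hident 0).integral_eq.trans (integral_indicator_one hp)
  have hslln := strong_law_ae_real (fun l => g ∘ Z l) hint (fun i j hij => (hind hij).comp hg hg)
    (fun l => (hident l).trans (hident 0).symm)
  rw [hmean] at hslln
  filter_upwards [hslln] with ω hω
  convert hω using 3 with n
  simp [g, Set.indicator_apply, Finset.sum_boole]

lemma measureReal_prod_univ_eq_sum {α β : Type*} [MeasurableSpace α] [MeasurableSpace β]
    [Fintype β] [MeasurableSingletonClass β] (μ : Measure (α × β)) [IsFiniteMeasure μ]
    {A : Set α} (hA : MeasurableSet A) :
    μ.real (A ×ˢ Set.univ) = ∑ b, μ.real (A ×ˢ {b}) := by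
  rw [← measureReal_biUnion_finset _ fun b _ => hA.prod (measurableSet_singleton b)]
  · simp [← Set.prod_iUnion, Set.iUnion_of_singleton]
  · intro a _ b _ hab
    exact Set.disjoint_prod.2 (Or.inr (Set.disjoint_singleton.2 hab))

section LabelShift

variable {X : Type*} [MeasurableSpace X] {k : ℕ}

def labelMarginal (P : Measure (X × Fin k)) : Fin k → ℝ :=
  fun y => P.real (Set.univ ×ˢ {y})

def predictionMarginal (Q : Measure (X × Fin k)) (f : X → Fin k) : Fin k → ℝ :=
  fun i => (Q.map Prod.fst).real (f ⁻¹' {i})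

/-- (A.1): the class-conditional distributions of `P` and `Q` agree. -/
def LabelShift (P Q : Measure (X × Fin k)) : Prop :=
  ∀ (y : Fin k) (A : Set X), MeasurableSet A →
    P (A ×ˢ ({y} : Set (Fin k))) * Q (Set.univ ×ˢ ({y} : Set (Fin k)))
      = Q (A ×ˢ ({y} : Set (Fin k))) * P (Set.univ ×ˢ ({y} : Set (Fin k)))

lemma LabelShift.measureReal_prod_singleton {P Q : Measure (X × Fin k)} (h : LabelShift P Q)
    {y : Fin k} (hy : labelMarginal P y ≠ 0) {A : Set X} (hA : MeasurableSet A) :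
    P.real (A ×ˢ {y}) * (labelMarginal Q y / labelMarginal P y) = Q.real (A ×ˢ {y}) := by
  rw [← mul_div_assoc, div_eq_iff hy]
  simp only [measureReal_def, labelMarginal, ← ENNReal.toReal_mul, h y A hA]

lemma LabelShift.confusion_mulVec {P Q : Measure (X × Fin k)} [IsFiniteMeasure Q]
    (h : LabelShift P Q) (hP : ∀ y, labelMarginal P y ≠ 0) {f : X → Fin k} (hf : Measurable f) :
    confusion P f *ᵥ (labelMarginal Q / labelMarginal P) = predictionMarginal Q f := by
  ext i
  have hfi : MeasurableSet (f ⁻¹' {i}) := hf (measurableSet_singleton i)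
  rw [predictionMarginal, map_measureReal_apply measurable_fst hfi, ← Set.prod_univ,
    measureReal_prod_univ_eq_sum Q hfi, mulVec, dotProduct]
  exact Finset.sum_congr rfl fun y _ => h.measureReal_prod_singleton (hP y) hfi

lemma LabelShift.labelMarginal_eq {P Q : Measure (X × Fin k)} [IsFiniteMeasure Q]
    (h : LabelShift P Q) (hP : ∀ y, labelMarginal P y ≠ 0) {f : X → Fin k} (hf : Measurable f)
    (hC : IsUnit (confusion P f).det) :
    labelMarginal Q = labelMarginal P * ((confusion P f)⁻¹ *ᵥ predictionMarginal Q f) := by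
  rw [← h.confusion_mulVec hP hf, mulVec_mulVec, nonsing_inv_mul _ hC, one_mulVec]
  ext y
  exact (mul_div_cancel₀ _ (hP y)).symm

end LabelShift

section InverseLimits

variable {ι α β 𝕜 : Type*} [Fintype ι] [DecidableEq ι] [NormedField 𝕜]
  {l : Filter α} {l' : Filter β} {A : α → Matrix ι ι 𝕜} {A₀ : Matrix ι ι 𝕜}
  {v : β → ι → 𝕜} {v₀ : ι → 𝕜}

lemma Filter.Tendsto.inv_mulVec (hA : Tendsto A l (𝓝 A₀)) (hA₀ : IsUnit A₀.det)
    (hv : Tendsto v l' (𝓝 v₀)) :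
    Tendsto (fun p : α × β => (A p.1)⁻¹ *ᵥ v p.2) (l ×ˢ l') (𝓝 (A₀⁻¹ *ᵥ v₀)) := by
  have hinv : ContinuousAt Inv.inv A₀ := continuousAt_matrix_inv A₀ <| by
    rw [Ring.inverse_eq_inv']
    exact continuousAt_inv₀ hA₀.ne_zero
  have hAinv : Tendsto (fun p : α × β => (A p.1)⁻¹) (l ×ˢ l') (𝓝 A₀⁻¹) :=
    (hinv.tendsto.comp hA).comp tendsto_fst
  have hmulVec : Continuous fun p : Matrix ι ι 𝕜 × (ι → 𝕜) => p.1 *ᵥ p.2 :=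
    continuous_fst.matrix_mulVec continuous_snd
  have h := (hmulVec.tendsto (A₀⁻¹, v₀)).comp (hAinv.prodMk_nhds (hv.comp tendsto_snd))
  exact h

lemma Filter.Tendsto.mul_of_eq_inv_mulVec {d : α → ι → 𝕜} {d₀ : ι → 𝕜}
    (hd : Tendsto d l (𝓝 d₀)) (hA : Tendsto A l (𝓝 A₀)) (hA₀ : IsUnit A₀.det)
    (hv : Tendsto v l' (𝓝 v₀)) {W : α → β → ι → 𝕜}
    (hW : ∀ a b, IsUnit (A a).det → W a b = (A a)⁻¹ *ᵥ v b) :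
    Tendsto (fun p : α × β => d p.1 * W p.1 p.2) (l ×ˢ l') (𝓝 (d₀ * (A₀⁻¹ *ᵥ v₀))) := by
  -- `W a b` is junk where `A a` is singular; by continuity of `det`, `A a` is eventually invertible
  have hdet : ∀ᶠ a in l, (A a).det ≠ 0 :=
    ((continuous_id.matrix_det.tendsto A₀).comp hA).eventually_ne hA₀.ne_zero
  refine ((hd.comp tendsto_fst).mul (hA.inv_mulVec hA₀ hv)).congr' ?_
  filter_upwards [hdet.prod_inl l'] with p hp
  rw [hW p.1 p.2 (isUnit_iff_ne_zero.2 hp)]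
  rfl

end InverseLimits

theorem bbse_label_marginal_consistent_general
    {X : Type*} [MeasurableSpace X] {k : ℕ}
    (P Q : Measure (X × Fin k)) [IsProbabilityMeasure Q]
    (f : X → Fin k) (hf : Measurable f)
    (A1 : ∀ (y : Fin k) (A : Set X), MeasurableSet A →
      P (A ×ˢ ({y} : Set (Fin k))) * Q (Set.univ ×ˢ ({y} : Set (Fin k)))
        = Q (A ×ˢ ({y} : Set (Fin k))) * P (Set.univ ×ˢ ({y} : Set (Fin k))))
    (A2 : ∀ y : Fin k, 0 < (P (Set.univ ×ˢ ({y} : Set (Fin k)))).toReal)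
    (A3 : IsUnit (confusion P f).det)
    {Ω : Type*} [MeasurableSpace Ω] (μ : Measure Ω) [IsProbabilityMeasure μ]
    (Z : ℕ → Ω → X × Fin k) (Z' : ℕ → Ω → X)
    (hZmeas : ∀ l, Measurable (Z l)) (hZ'meas : ∀ l, Measurable (Z' l))
    (hZlaw : ∀ l, μ.map (Z l) = P) (hZ'law : ∀ l, μ.map (Z' l) = Q.map Prod.fst)
    (hindep : iIndepFun (m := pairMS (X := X) (k := k)) (pairFam Z Z') μ)
    (West : ℕ → ℕ → Ω → Fin k → ℝ)
    (hWest : ∀ (n m : ℕ) (ω : Ω), IsUnit (empConfusion f Z n ω).det →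
      West n m ω = (empConfusion f Z n ω)⁻¹ *ᵥ empMu f Z' m ω) :
    ∀ᵐ ω ∂μ, Tendsto (fun nm : ℕ × ℕ => fun j => empNu Z nm.1 ω j * West nm.1 nm.2 ω j)
      atTop (nhds (fun j => (Q (Set.univ ×ˢ ({j} : Set (Fin k)))).toReal)) := by
  have hZind : Pairwise fun i j => IndepFun (Z i) (Z j) μ := fun i j hij =>
    hindep.indepFun (Sum.inl_injective.ne hij)
  have hZ'ind : Pairwise fun i j => IndepFun (Z' i) (Z' j) μ := fun i j hij =>
    hindep.indepFun (Sum.inr_injective.ne hij)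
  have hC : ∀ᵐ ω ∂μ, Tendsto (empConfusion f Z · ω) atTop (𝓝 (confusion P f)) := by
    have hentry : ∀ i j, ∀ᵐ ω ∂μ,
        Tendsto (empConfusion f Z · ω i j) atTop (𝓝 (confusion P f i j)) := fun i j =>
      ae_tendsto_card_filter_div hZmeas hZlaw hZind (fun z => f z.1 = i ∧ z.2 = j)
        ((hf (measurableSet_singleton i)).prod (measurableSet_singleton j))
    filter_upwards [ae_all_iff.2 fun i => ae_all_iff.2 (hentry i)] with ω hω
    exact tendsto_pi_nhds.2 fun i => tendsto_pi_nhds.2 (hω i)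
  have hμ : ∀ᵐ ω ∂μ, Tendsto (empMu f Z' · ω) atTop (𝓝 (predictionMarginal Q f)) := by
    simp_rw [tendsto_pi_nhds, ae_all_iff]
    intro i
    exact ae_tendsto_card_filter_div hZ'meas hZ'law hZ'ind (fun x => f x = i)
      (hf (measurableSet_singleton i))
  have hν : ∀ᵐ ω ∂μ, Tendsto (empNu Z · ω) atTop (𝓝 (labelMarginal P)) := by
    simp_rw [tendsto_pi_nhds, ae_all_iff]
    intro j
    simp only [labelMarginal, Set.univ_prod]
    exact ae_tendsto_card_filter_div hZmeas hZlaw hZind (fun z => z.2 = j)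
      (measurable_snd (measurableSet_singleton j))
  have hQ : labelMarginal Q = labelMarginal P * ((confusion P f)⁻¹ *ᵥ predictionMarginal Q f) :=
    LabelShift.labelMarginal_eq A1 (fun y => (A2 y).ne') hf A3
  filter_upwards [hC, hμ, hν] with ω hCω hμω hνω
  rw [← prod_atTop_atTop_eq]
  change Tendsto _ _ (𝓝 (labelMarginal Q))
  rw [hQ]
  exact hνω.mul_of_eq_inv_mulVec hCω A3 hμω (hWest · · ω)

/-- Consistency of BBSE, part 2. Under the same assumptions, the estimator
`μ̂_y = diag(ν̂_y) ŵ` converges almost surely to the target label marginal `μ_y` as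
`n, m → ∞`. -/
theorem bbse_label_marginal_consistent
    {X : Type*} [MeasurableSpace X] {k : ℕ} (hk : 1 ≤ k)
    (P Q : Measure (X × Fin k)) [IsProbabilityMeasure P] [IsProbabilityMeasure Q]
    (f : X → Fin k) (hf : Measurable f)
    (A1 : ∀ (y : Fin k) (A : Set X), MeasurableSet A →
      P (A ×ˢ ({y} : Set (Fin k))) * Q (Set.univ ×ˢ ({y} : Set (Fin k)))
        = Q (A ×ˢ ({y} : Set (Fin k))) * P (Set.univ ×ˢ ({y} : Set (Fin k))))
    (A2 : ∀ y : Fin k, 0 < (P (Set.univ ×ˢ ({y} : Set (Fin k)))).toReal)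
    (A3 : IsUnit (confusion P f).det)
    {Ω : Type*} [MeasurableSpace Ω] (μ : Measure Ω) [IsProbabilityMeasure μ]
    (Z : ℕ → Ω → X × Fin k) (Z' : ℕ → Ω → X)
    (hZmeas : ∀ l, Measurable (Z l)) (hZ'meas : ∀ l, Measurable (Z' l))
    (hZlaw : ∀ l, μ.map (Z l) = P) (hZ'law : ∀ l, μ.map (Z' l) = Q.map Prod.fst)
    (hindep : iIndepFun (m := pairMS (X := X) (k := k)) (pairFam Z Z') μ)
    (West : ℕ → ℕ → Ω → Fin k → ℝ)
    (hWest : ∀ (n m : ℕ) (ω : Ω), IsUnit (empConfusion f Z n ω).det →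
      West n m ω = (empConfusion f Z n ω)⁻¹ *ᵥ empMu f Z' m ω) :
    ∀ᵐ ω ∂μ, Tendsto (fun nm : ℕ × ℕ => fun j => empNu Z nm.1 ω j * West nm.1 nm.2 ω j)
      atTop (nhds (fun j => (Q (Set.univ ×ˢ ({j} : Set (Fin k)))).toReal)) :=
  bbse_label_marginal_consistent_general P Q f hf A1 A2 A3 μ Z Z' hZmeas hZ'meas hZlaw hZ'law hindep
    West hWest

end
end

section
/- (Detecting label shift) Assume the label shift assumption (A.1), p(y) > 0 for all y (A.2), and that the confusion matrix C is invertible (A.3). Then the label marginals agree, q(y) = p(y) for all y, if and only if the prediction marginals agree, i.e., P(f⁻¹(i) × {1,…,k}) = Q(f⁻¹(i) × {1,…,k}) for all labels i. -/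
/-! Under label shift the class-conditional laws of `P` and `Q` coincide, so `Q` is `P`
reweighted label by label with the importance weights `w y = q(y) / p(y)`. Consequently the
prediction marginals of `Q` form the vector `C w` and those of `P` the vector `C 1`; since `C` is
invertible, they agree exactly when `w = 1`, i.e. when `q = p`. -/

open MeasureTheory ProbabilityTheory Filter Matrix

noncomputable section

section LabelShift

variable {X ι : Type*} [MeasurableSpace X] [MeasurableSpace ι]

def IsLabelShift (P Q : Measure (X × ι)) : Prop :=
  ∀ (y : ι) (A : Set X), MeasurableSet A →
    P (A ×ˢ {y}) * Q (Set.univ ×ˢ {y}) = Q (A ×ˢ {y}) * P (Set.univ ×ˢ {y})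

def importanceWeight (P Q : Measure (X × ι)) (y : ι) : ℝ :=
  (Q (Set.univ ×ˢ {y})).toReal / (P (Set.univ ×ˢ {y})).toReal

theorem measure_prod_univ_eq_sum_s7 [Fintype ι] [MeasurableSingletonClass ι]
    (μ : Measure (X × ι)) {S : Set X} (hS : MeasurableSet S) :
    μ (S ×ˢ Set.univ) = ∑ y, μ (S ×ˢ {y}) := by
  rw [← Set.iUnion_of_singleton ι, Set.prod_iUnion, measure_iUnion _
    fun y => hS.prod (measurableSet_singleton y), tsum_fintype]
  intro y y' hyy'
  exact Set.disjoint_prod.mpr (Or.inr (Set.disjoint_singleton.mpr hyy'))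

theorem IsLabelShift.toReal_measure_prod_singleton {P Q : Measure (X × ι)}
    [IsFiniteMeasure P] [IsFiniteMeasure Q] (hPQ : IsLabelShift P Q) {y : ι}
    (hp : 0 < (P (Set.univ ×ˢ {y})).toReal) {A : Set X} (hA : MeasurableSet A) :
    (Q (A ×ˢ {y})).toReal = (P (A ×ˢ {y})).toReal * importanceWeight P Q y := by
  have h := congrArg ENNReal.toReal (hPQ y A hA)
  rw [ENNReal.toReal_mul, ENNReal.toReal_mul] at h
  rw [importanceWeight, mul_div_assoc', h, mul_div_cancel_right₀ _ hp.ne']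

theorem importanceWeight_eq_one_iff {P Q : Measure (X × ι)} [IsFiniteMeasure P]
    [IsFiniteMeasure Q] (hp : ∀ y, 0 < (P (Set.univ ×ˢ {y})).toReal) :
    importanceWeight P Q = 1 ↔ ∀ y, Q (Set.univ ×ˢ {y}) = P (Set.univ ×ˢ {y}) := by
  simp only [funext_iff, Pi.one_apply, importanceWeight, div_eq_one_iff_eq (hp _).ne',
    ENNReal.toReal_eq_toReal_iff' (measure_ne_top _ _) (measure_ne_top _ _)]

end LabelShift

section Confusion

variable {X : Type*} [MeasurableSpace X] {k : ℕ} {f : X → Fin k}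

theorem confusion_mulVec_one (P : Measure (X × Fin k)) [IsFiniteMeasure P] (hf : Measurable f) :
    confusion P f *ᵥ 1 = fun i => (P ((f ⁻¹' {i}) ×ˢ Set.univ)).toReal := by
  ext i
  rw [measure_prod_univ_eq_sum_s7 P (hf (measurableSet_singleton i)),
    ENNReal.toReal_sum fun y _ => measure_ne_top _ _]
  simp only [mulVec, dotProduct, Pi.one_apply, mul_one, confusion]

theorem IsLabelShift.confusion_mulVec_importanceWeight {P Q : Measure (X × Fin k)}
    [IsFiniteMeasure P] [IsFiniteMeasure Q] (hPQ : IsLabelShift P Q) (hf : Measurable f)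
    (hp : ∀ y, 0 < (P (Set.univ ×ˢ {y})).toReal) :
    confusion P f *ᵥ importanceWeight P Q = fun i => (Q ((f ⁻¹' {i}) ×ˢ Set.univ)).toReal := by
  ext i
  have hi := hf (measurableSet_singleton i)
  rw [measure_prod_univ_eq_sum_s7 Q hi, ENNReal.toReal_sum fun y _ => measure_ne_top _ _]
  exact Fintype.sum_congr _ _ fun y => (hPQ.toReal_measure_prod_singleton (hp y) hi).symm

end Confusion

theorem label_shift_detection_general
    {X : Type*} [MeasurableSpace X] {k : ℕ}
    (P Q : Measure (X × Fin k)) [IsProbabilityMeasure P] [IsProbabilityMeasure Q]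
    (f : X → Fin k) (hf : Measurable f)
    (A1 : ∀ (y : Fin k) (A : Set X), MeasurableSet A →
      P (A ×ˢ ({y} : Set (Fin k))) * Q (Set.univ ×ˢ ({y} : Set (Fin k)))
        = Q (A ×ˢ ({y} : Set (Fin k))) * P (Set.univ ×ˢ ({y} : Set (Fin k))))
    (A2 : ∀ y : Fin k, 0 < (P (Set.univ ×ˢ ({y} : Set (Fin k)))).toReal)
    (A3 : IsUnit (confusion P f).det) :
    (∀ y : Fin k, Q (Set.univ ×ˢ ({y} : Set (Fin k))) = P (Set.univ ×ˢ ({y} : Set (Fin k))))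
      ↔ ∀ i : Fin k, P ((f ⁻¹' {i}) ×ˢ (Set.univ : Set (Fin k)))
          = Q ((f ⁻¹' {i}) ×ˢ (Set.univ : Set (Fin k))) := by
  have hPQ : IsLabelShift P Q := A1
  have hC : Function.Injective (confusion P f *ᵥ ·) :=
    mulVec_injective_iff_isUnit.mpr ((isUnit_iff_isUnit_det _).mpr A3)
  rw [← importanceWeight_eq_one_iff A2, ← hC.eq_iff, hPQ.confusion_mulVec_importanceWeight hf A2,
    confusion_mulVec_one P hf, funext_iff]
  refine forall_congr' fun i => ?_
  rw [ENNReal.toReal_eq_toReal_iff' (measure_ne_top _ _) (measure_ne_top _ _), eq_comm]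

/-- Detecting label shift. Under label shift, positivity, and an invertible
confusion matrix, the label marginals of `P` and `Q` agree iff the prediction marginals
agree. -/
theorem label_shift_detection
    {X : Type*} [MeasurableSpace X] {k : ℕ} (hk : 1 ≤ k)
    (P Q : Measure (X × Fin k)) [IsProbabilityMeasure P] [IsProbabilityMeasure Q]
    (f : X → Fin k) (hf : Measurable f)
    (A1 : ∀ (y : Fin k) (A : Set X), MeasurableSet A →
      P (A ×ˢ ({y} : Set (Fin k))) * Q (Set.univ ×ˢ ({y} : Set (Fin k)))
        = Q (A ×ˢ ({y} : Set (Fin k))) * P (Set.univ ×ˢ ({y} : Set (Fin k))))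
    (A2 : ∀ y : Fin k, 0 < (P (Set.univ ×ˢ ({y} : Set (Fin k)))).toReal)
    (A3 : IsUnit (confusion P f).det) :
    (∀ y : Fin k, Q (Set.univ ×ˢ ({y} : Set (Fin k))) = P (Set.univ ×ˢ ({y} : Set (Fin k))))
      ↔ ∀ i : Fin k, P ((f ⁻¹' {i}) ×ˢ (Set.univ : Set (Fin k)))
          = Q ((f ⁻¹' {i}) ×ˢ (Set.univ : Set (Fin k))) :=
  label_shift_detection_general P Q f hf A1 A2 A3

end
end

section
/- (Probability that the empirical confusion matrix is nearly singular) Let C be the confusion matrix with smallest singular value δ := σ_min(C) > 0, and let Ĉ be the empirical confusion matrix from n iid samples from P. Then P(σ_min(Ĉ) < δ/2) ≤ 2k² exp(−n δ² / (2k³)); in particular, the probability that Ĉ is not invertible is at most 2k² exp(−n δ² / (2k³)). -/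
/-!
If every entry of `Ĉ` is within `t = δ / (2k)` of the corresponding entry of `C`, then
`‖(C - Ĉ) x‖ ≤ k t ‖x‖` for every vector `x`, and since `σ_min(M) = min_{‖x‖ = 1} ‖M x‖` this gives
`σ_min(Ĉ) ≥ δ - k t = δ / 2`. Each entry of `n Ĉ` is a sum of `n` independent indicators with
mean `C_ij`, so by Hoeffding's inequality it misses `n C_ij` by at least `n t` with probability at
most `2 exp(-2 n t²) = 2 exp(-n δ² / (2k²))`; a union bound over the `k²` entries gives the claim.
A singular `Ĉ` has `σ_min(Ĉ) = 0 < δ / 2`.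
-/

open MeasureTheory ProbabilityTheory Filter Matrix

noncomputable section

/-- The smallest singular value of a square real matrix: the square root of the smallest
eigenvalue of `Mᴴ M`. -/
def sigmaMin {k : ℕ} (M : Matrix (Fin k) (Fin k) ℝ) : ℝ :=
  Real.sqrt (⨅ i, (Matrix.isHermitian_conjTranspose_mul_self M).eigenvalues i)

namespace Matrix

section Euclidean

variable {𝕜 m n : Type*} [RCLike 𝕜] [Fintype m] [Fintype n] [DecidableEq m] [DecidableEq n]

lemma IsHermitian.toEuclideanLin_eigenvectorBasis {A : Matrix n n 𝕜} (hA : A.IsHermitian)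
    (j : n) :
    toEuclideanLin A (hA.eigenvectorBasis j) = (hA.eigenvalues j : 𝕜) • hA.eigenvectorBasis j := by
  apply WithLp.ofLp_injective
  rw [ofLp_toLpLin, toLin'_apply, hA.mulVec_eigenvectorBasis, WithLp.ofLp_smul,
    RCLike.real_smul_eq_coe_smul (K := 𝕜)]

/-- Expanding `x` in an orthonormal eigenbasis turns `⟪x, A x⟫` into `∑ λᵢ ‖⟪bᵢ, x⟫‖²`. -/
lemma IsHermitian.iInf_eigenvalues_mul_norm_sq_le {A : Matrix n n 𝕜} (hA : A.IsHermitian)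
    (x : EuclideanSpace 𝕜 n) :
    (⨅ i, hA.eigenvalues i) * ‖x‖ ^ 2 ≤ RCLike.re (inner 𝕜 x (toEuclideanLin A x)) := by
  set b := hA.eigenvectorBasis
  have hterm (i : n) : inner 𝕜 x (b i) * inner 𝕜 (b i) (toEuclideanLin A x)
      = (hA.eigenvalues i : 𝕜) * (‖inner 𝕜 (b i) x‖ ^ 2 : ℝ) := by
    rw [← isSymmetric_toEuclideanLin_iff.mpr hA, hA.toEuclideanLin_eigenvectorBasis,
      inner_smul_left, RCLike.conj_ofReal, ← inner_conj_symm x, RCLike.ofReal_pow,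
      ← RCLike.conj_mul]
    ring
  rw [← b.sum_inner_mul_inner, ← b.sum_sq_norm_inner_right x, Finset.mul_sum]
  simp_rw [hterm, map_sum, ← RCLike.ofReal_mul, RCLike.ofReal_re]
  exact Finset.sum_le_sum fun i _ =>
    mul_le_mul_of_nonneg_right (ciInf_le (Set.finite_range _).bddBelow i) (by positivity)

lemma norm_toEuclideanLin_sq (M : Matrix m n 𝕜) (x : EuclideanSpace 𝕜 n) :
    ‖toEuclideanLin M x‖ ^ 2 = RCLike.re (inner 𝕜 x (toEuclideanLin (Mᴴ * M) x)) := by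
  rw [toLpLin_mul_same, LinearMap.comp_apply, toEuclideanLin_conjTranspose_eq_adjoint,
    LinearMap.adjoint_inner_right, inner_self_eq_norm_sq]

lemma norm_toEuclideanLin_le_of_abs_le {E : Matrix n n ℝ} {t : ℝ} (hE : ∀ i j, |E i j| ≤ t)
    (x : EuclideanSpace ℝ n) : ‖toEuclideanLin E x‖ ≤ Fintype.card n * t * ‖x‖ := by
  have hct : 0 ≤ Fintype.card n * t := by
    rcases isEmpty_or_nonempty n with _ | ⟨⟨i⟩⟩
    · simp
    · exact mul_nonneg (Nat.cast_nonneg _) ((abs_nonneg _).trans (hE i i))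
  have hrow (i : n) : (E *ᵥ x.ofLp) i ^ 2 ≤ Fintype.card n * t ^ 2 * ‖x‖ ^ 2 := by
    calc (E *ᵥ x.ofLp) i ^ 2 ≤ (∑ j, E i j ^ 2) * ∑ j, x j ^ 2 :=
          Finset.sum_mul_sq_le_sq_mul_sq _ _ _
      _ ≤ (∑ _j : n, t ^ 2) * ‖x‖ ^ 2 := by
          rw [EuclideanSpace.real_norm_sq_eq]
          refine mul_le_mul_of_nonneg_right (Finset.sum_le_sum fun j _ => ?_) (by positivity)
          exact sq_le_sq' (abs_le.mp (hE i j)).1 (abs_le.mp (hE i j)).2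
      _ = Fintype.card n * t ^ 2 * ‖x‖ ^ 2 := by simp
  refine le_of_sq_le_sq ?_ (by positivity)
  calc ‖toEuclideanLin E x‖ ^ 2 = ∑ i, (E *ᵥ x.ofLp) i ^ 2 := by
        rw [EuclideanSpace.real_norm_sq_eq]; rfl
    _ ≤ ∑ _i : n, Fintype.card n * t ^ 2 * ‖x‖ ^ 2 := Finset.sum_le_sum fun i _ => hrow i
    _ = (Fintype.card n * t * ‖x‖) ^ 2 := by simp; ring

end Euclidean

end Matrix

section SigmaMin

variable {k : ℕ}

lemma sigmaMin_sq (M : Matrix (Fin k) (Fin k) ℝ) :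
    sigmaMin M ^ 2 = ⨅ i, (isHermitian_conjTranspose_mul_self M).eigenvalues i :=
  Real.sq_sqrt <| Real.iInf_nonneg (posSemidef_conjTranspose_mul_self M).eigenvalues_nonneg

lemma sigmaMin_mul_norm_le (M : Matrix (Fin k) (Fin k) ℝ) (x : EuclideanSpace ℝ (Fin k)) :
    sigmaMin M * ‖x‖ ≤ ‖toEuclideanLin M x‖ := by
  refine le_of_sq_le_sq ?_ (norm_nonneg _)
  rw [mul_pow, sigmaMin_sq, norm_toEuclideanLin_sq]
  exact (isHermitian_conjTranspose_mul_self M).iInf_eigenvalues_mul_norm_sq_le x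

lemma exists_norm_eq_one_norm_toEuclideanLin_eq_sigmaMin [NeZero k]
    (M : Matrix (Fin k) (Fin k) ℝ) :
    ∃ x : EuclideanSpace ℝ (Fin k), ‖x‖ = 1 ∧ ‖toEuclideanLin M x‖ = sigmaMin M := by
  set hA := isHermitian_conjTranspose_mul_self M
  obtain ⟨i, hi⟩ := exists_eq_ciInf_of_finite (f := hA.eigenvalues)
  have hx : ‖hA.eigenvectorBasis i‖ = 1 := hA.eigenvectorBasis.orthonormal.1 i
  refine ⟨_, hx, ?_⟩
  rw [sigmaMin, ← hi, ← Real.sqrt_sq (norm_nonneg _), norm_toEuclideanLin_sq,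
    hA.toEuclideanLin_eigenvectorBasis, inner_smul_right, inner_self_eq_norm_sq_to_K, hx]
  simp

lemma sigmaMin_le_sigmaMin_add [NeZero k] (M N : Matrix (Fin k) (Fin k) ℝ) {c : ℝ}
    (hMN : ∀ x, ‖toEuclideanLin (M - N) x‖ ≤ c * ‖x‖) : sigmaMin M ≤ sigmaMin N + c := by
  obtain ⟨x, hx, hNx⟩ := exists_norm_eq_one_norm_toEuclideanLin_eq_sigmaMin N
  calc sigmaMin M = sigmaMin M * ‖x‖ := by rw [hx, mul_one]
    _ ≤ ‖toEuclideanLin M x‖ := sigmaMin_mul_norm_le M x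
    _ ≤ ‖toEuclideanLin N x‖ + ‖toEuclideanLin (M - N) x‖ := by
        rw [map_sub, LinearMap.sub_apply]
        exact norm_le_insert' _ _
    _ ≤ sigmaMin N + c := by rw [hNx]; simpa [hx] using hMN x

lemma sigmaMin_le_sigmaMin_add_of_abs_sub_le [NeZero k] {M N : Matrix (Fin k) (Fin k) ℝ} {t : ℝ}
    (hMN : ∀ i j, |M i j - N i j| ≤ t) : sigmaMin M ≤ sigmaMin N + k * t :=
  sigmaMin_le_sigmaMin_add M N fun x => by
    simpa using norm_toEuclideanLin_le_of_abs_le (E := M - N) (by simpa using hMN) x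

lemma sigmaMin_eq_zero_of_det_eq_zero {M : Matrix (Fin k) (Fin k) ℝ} (hM : M.det = 0) :
    sigmaMin M = 0 := by
  obtain ⟨v, hv, hMv⟩ := exists_mulVec_eq_zero_iff.mpr hM
  have hle := sigmaMin_mul_norm_le M (WithLp.toLp 2 v)
  rw [toLpLin_toLp, toLin'_apply, hMv, WithLp.toLp_zero, norm_zero] at hle
  have hpos : 0 < ‖WithLp.toLp 2 v‖ := norm_pos_iff.mpr (by simpa using hv)
  exact le_antisymm (nonpos_of_mul_nonpos_left hle hpos) (Real.sqrt_nonneg _)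

end SigmaMin

section Hoeffding

variable {Ω : Type*} [MeasurableSpace Ω] {μ : Measure Ω} [IsProbabilityMeasure μ]

lemma measureReal_le_abs_sum_sub_integral_le {Y : ℕ → Ω → ℝ} (hindep : iIndepFun Y μ)
    (hmeas : ∀ l, AEMeasurable (Y l) μ) (hY : ∀ l, ∀ᵐ ω ∂μ, Y l ω ∈ Set.Icc (0 : ℝ) 1)
    (n : ℕ) {ε : ℝ} (hε : 0 ≤ ε) :
    μ.real {ω | n * ε ≤ |∑ l ∈ Finset.range n, (Y l ω - μ[Y l])|}
      ≤ 2 * Real.exp (-2 * n * ε ^ 2) := by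
  set X : ℕ → Ω → ℝ := fun l ω => Y l ω - μ[Y l]
  have hX : iIndepFun X μ := by
    exact hindep.comp (fun l y => y - μ[Y l]) fun _ => measurable_sub_const _
  have hsubG (l : ℕ) : HasSubgaussianMGF (X l) (1 / 4) μ := by
    convert hasSubgaussianMGF_of_mem_Icc (hmeas l) (hY l)
    norm_num
  have hexp : Real.exp (-(n * ε) ^ 2 / (2 * n * ((1 / 4 : NNReal) : ℝ)))
      = Real.exp (-2 * n * ε ^ 2) := by
    rcases n.eq_zero_or_pos with rfl | hn
    · simp
    · congr 1
      push_cast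
      field_simp
      ring
  have hupper := HasSubgaussianMGF.measure_sum_range_ge_le_of_iIndepFun (n := n) hX
    (fun l _ => hsubG l) (mul_nonneg n.cast_nonneg hε)
  have hlower := HasSubgaussianMGF.measure_sum_range_ge_le_of_iIndepFun (n := n)
    (X := fun l => -X l) (hX.comp (fun _ x => -x) fun _ => measurable_neg)
    (fun l _ => (hsubG l).neg) (mul_nonneg n.cast_nonneg hε)
  rw [hexp] at hupper hlower
  calc μ.real {ω | n * ε ≤ |∑ l ∈ Finset.range n, X l ω|}
      ≤ μ.real ({ω | n * ε ≤ ∑ l ∈ Finset.range n, X l ω}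
          ∪ {ω | n * ε ≤ ∑ l ∈ Finset.range n, (-X l) ω}) := by
        refine measureReal_mono (fun ω hω => ?_)
        simpa [le_abs', Finset.sum_neg_distrib, le_neg, or_comm] using hω
    _ ≤ 2 * Real.exp (-2 * n * ε ^ 2) := by
        linarith [measureReal_union_le (μ := μ) {ω | n * ε ≤ ∑ l ∈ Finset.range n, X l ω}
          {ω | n * ε ≤ ∑ l ∈ Finset.range n, (-X l) ω}]

end Hoeffding

section Confusion

variable {X Ω : Type*} {k : ℕ}

/-- Multiplied out by `n`, so that it also holds for `n = 0`, where `empConfusion` is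
`0 / 0 = 0`. -/
lemma natCast_mul_empConfusion (f : X → Fin k) (Z : ℕ → Ω → X × Fin k) (n : ℕ) (ω : Ω)
    (i j : Fin k) :
    n * empConfusion f Z n ω i j = ∑ l ∈ Finset.range n,
      ((f ⁻¹' {i}) ×ˢ ({j} : Set (Fin k))).indicator (1 : X × Fin k → ℝ) (Z l ω) := by
  rcases n.eq_zero_or_pos with rfl | hn
  · simp
  rw [empConfusion, mul_div_cancel₀ _ (by positivity), Finset.card_filter]
  push_cast
  refine Finset.sum_congr rfl fun l _ => ?_
  classical
  simp [Set.indicator_apply]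

variable [MeasurableSpace X] [MeasurableSpace Ω]

lemma integral_indicator_comp_eq_confusion {P : Measure (X × Fin k)} {f : X → Fin k}
    (hf : Measurable f) {μ : Measure Ω} {Z : Ω → X × Fin k} (hZmeas : Measurable Z)
    (hZlaw : μ.map Z = P) (i j : Fin k) :
    ∫ ω, ((f ⁻¹' {i}) ×ˢ ({j} : Set (Fin k))).indicator (1 : X × Fin k → ℝ) (Z ω) ∂μ
      = confusion P f i j := by
  have hS : MeasurableSet ((f ⁻¹' {i}) ×ˢ ({j} : Set (Fin k))) :=
    (hf (measurableSet_singleton i)).prod (measurableSet_singleton j)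
  rw [← integral_map hZmeas.aemeasurable (measurable_one.indicator hS).aestronglyMeasurable,
    hZlaw, integral_indicator_one hS]
  rfl

lemma measureReal_lt_abs_empConfusion_sub_confusion_le {P : Measure (X × Fin k)}
    {f : X → Fin k} (hf : Measurable f) {μ : Measure Ω} [IsProbabilityMeasure μ]
    {Z : ℕ → Ω → X × Fin k} (hZmeas : ∀ l, Measurable (Z l)) (hZlaw : ∀ l, μ.map (Z l) = P)
    (hindep : iIndepFun Z μ) (n : ℕ) (i j : Fin k) {t : ℝ} (ht : 0 ≤ t) :
    μ.real {ω | t < |empConfusion f Z n ω i j - confusion P f i j|}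
      ≤ 2 * Real.exp (-2 * n * t ^ 2) := by
  set S : Set (X × Fin k) := (f ⁻¹' {i}) ×ˢ {j}
  have hS : MeasurableSet S := (hf (measurableSet_singleton i)).prod (measurableSet_singleton j)
  set Y : ℕ → Ω → ℝ := fun l ω => S.indicator 1 (Z l ω)
  have hY : iIndepFun Y μ := by
    exact hindep.comp (fun _ => S.indicator 1) fun _ => measurable_const.indicator hS
  have hmean (l : ℕ) : μ[Y l] = confusion P f i j :=
    integral_indicator_comp_eq_confusion hf (hZmeas l) (hZlaw l) i j
  refine (measureReal_mono fun ω hω => ?_).trans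
    (measureReal_le_abs_sum_sub_integral_le hY
      (fun l => (measurable_const.indicator hS).comp_aemeasurable (hZmeas l).aemeasurable)
      (fun l => ae_of_all _ fun ω => ⟨Set.indicator_nonneg (fun _ _ => zero_le_one) _,
        Set.indicator_le_self' (fun _ _ => zero_le_one) _⟩) n ht)
  simp only [Set.mem_ofPred_eq, hmean, Finset.sum_sub_distrib, Finset.sum_const,
    Finset.card_range, nsmul_eq_mul] at hω ⊢
  rw [← natCast_mul_empConfusion, ← mul_sub, abs_mul, Nat.abs_cast]
  exact mul_le_mul_of_nonneg_left hω.le n.cast_nonneg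

lemma measureReal_sigmaMin_empConfusion_lt_half_le (hk : 1 ≤ k) {P : Measure (X × Fin k)}
    {f : X → Fin k} (hf : Measurable f) {μ : Measure Ω} [IsProbabilityMeasure μ]
    {Z : ℕ → Ω → X × Fin k} (hZmeas : ∀ l, Measurable (Z l)) (hZlaw : ∀ l, μ.map (Z l) = P)
    (hindep : iIndepFun Z μ) (n : ℕ) :
    μ.real {ω | sigmaMin (empConfusion f Z n ω) < sigmaMin (confusion P f) / 2}
      ≤ 2 * k ^ 2 * Real.exp (-n * sigmaMin (confusion P f) ^ 2 / (2 * k ^ 2)) := by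
  have : NeZero k := ⟨by omega⟩
  set δ := sigmaMin (confusion P f)
  set t := δ / (2 * k) with ht_def
  have ht : 0 ≤ t := div_nonneg (Real.sqrt_nonneg _) (by positivity)
  have hkt : k * t = δ / 2 := by rw [ht_def]; field_simp
  have hcover : {ω | sigmaMin (empConfusion f Z n ω) < δ / 2}
      ⊆ ⋃ q : Fin k × Fin k, {ω | t < |empConfusion f Z n ω q.1 q.2 - confusion P f q.1 q.2|} := by
    intro ω hω
    by_contra hcover
    simp only [Set.mem_iUnion, Set.mem_ofPred_eq, not_exists, not_lt] at hcover
    have := sigmaMin_le_sigmaMin_add_of_abs_sub_le (M := confusion P f)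
      (N := empConfusion f Z n ω) fun i j => by rw [abs_sub_comm]; exact hcover (i, j)
    simp only [Set.mem_ofPred_eq] at hω
    linarith
  calc _ ≤ _ := measureReal_mono hcover
    _ ≤ ∑ q : Fin k × Fin k,
          μ.real {ω | t < |empConfusion f Z n ω q.1 q.2 - confusion P f q.1 q.2|} :=
        measureReal_iUnion_fintype_le _
    _ ≤ ∑ _q : Fin k × Fin k, 2 * Real.exp (-2 * n * t ^ 2) := Finset.sum_le_sum fun q _ =>
        measureReal_lt_abs_empConfusion_sub_confusion_le hf hZmeas hZlaw hindep n q.1 q.2 ht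
    _ = 2 * k ^ 2 * Real.exp (-n * δ ^ 2 / (2 * k ^ 2)) := by
        rw [Finset.sum_const, Finset.card_univ, Fintype.card_prod, Fintype.card_fin, nsmul_eq_mul,
          ht_def]
        push_cast
        rw [← mul_assoc, mul_comm _ (2 : ℝ), ← sq]
        congr 2
        field_simp

end Confusion

theorem empirical_confusion_nearly_singular_general
    {X : Type*} [MeasurableSpace X] {k : ℕ} (hk : 1 ≤ k)
    (P : Measure (X × Fin k))
    (f : X → Fin k) (hf : Measurable f)
    {Ω : Type*} [MeasurableSpace Ω] (μ : Measure Ω) [IsProbabilityMeasure μ]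
    (Z : ℕ → Ω → X × Fin k)
    (hZmeas : ∀ l, Measurable (Z l)) (hZlaw : ∀ l, μ.map (Z l) = P)
    (hindep : iIndepFun Z μ)
    (hσ : 0 < sigmaMin (confusion P f)) (n : ℕ) :
    (μ {ω | sigmaMin (empConfusion f Z n ω) < sigmaMin (confusion P f) / 2}).toReal
        ≤ 2 * k ^ 2 * Real.exp (-(n : ℝ) * (sigmaMin (confusion P f)) ^ 2 / (2 * k ^ 3)) ∧
      (μ {ω | ¬ IsUnit (empConfusion f Z n ω).det}).toReal
        ≤ 2 * k ^ 2 * Real.exp (-(n : ℝ) * (sigmaMin (confusion P f)) ^ 2 / (2 * k ^ 3)) := by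
  have hnear : μ.real {ω | sigmaMin (empConfusion f Z n ω) < sigmaMin (confusion P f) / 2}
      ≤ 2 * k ^ 2 * Real.exp (-(n : ℝ) * (sigmaMin (confusion P f)) ^ 2 / (2 * k ^ 3)) := by
    refine (measureReal_sigmaMin_empConfusion_lt_half_le hk hf hZmeas hZlaw hindep n).trans ?_
    have hk' : (1 : ℝ) ≤ k := by exact_mod_cast hk
    rw [neg_mul, neg_div, neg_div]
    gcongr
    norm_num
  have hsingular : {ω | ¬ IsUnit (empConfusion f Z n ω).det}
      ⊆ {ω | sigmaMin (empConfusion f Z n ω) < sigmaMin (confusion P f) / 2} := fun ω hω => by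
    rw [Set.mem_ofPred_eq, isUnit_iff_ne_zero, not_not] at hω
    rw [Set.mem_ofPred_eq, sigmaMin_eq_zero_of_det_eq_zero hω]
    exact half_pos hσ
  exact ⟨hnear, (measureReal_mono hsingular).trans hnear⟩

/-- Probability that the empirical confusion matrix is nearly singular.
`P(σ_min(Ĉ) < δ/2) ≤ 2k² exp(-n δ² / (2k³))`, and in particular the probability that `Ĉ`
is not invertible is at most the same quantity. -/
theorem empirical_confusion_nearly_singular
    {X : Type*} [MeasurableSpace X] {k : ℕ} (hk : 1 ≤ k)
    (P : Measure (X × Fin k)) [IsProbabilityMeasure P]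
    (f : X → Fin k) (hf : Measurable f)
    {Ω : Type*} [MeasurableSpace Ω] (μ : Measure Ω) [IsProbabilityMeasure μ]
    (Z : ℕ → Ω → X × Fin k)
    (hZmeas : ∀ l, Measurable (Z l)) (hZlaw : ∀ l, μ.map (Z l) = P)
    (hindep : iIndepFun Z μ)
    (hσ : 0 < sigmaMin (confusion P f)) (n : ℕ) :
    (μ {ω | sigmaMin (empConfusion f Z n ω) < sigmaMin (confusion P f) / 2}).toReal
        ≤ 2 * k ^ 2 * Real.exp (-(n : ℝ) * (sigmaMin (confusion P f)) ^ 2 / (2 * k ^ 3)) ∧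
      (μ {ω | ¬ IsUnit (empConfusion f Z n ω).det}).toReal
        ≤ 2 * k ^ 2 * Real.exp (-(n : ℝ) * (sigmaMin (confusion P f)) ^ 2 / (2 * k ^ 3)) :=
  empirical_confusion_nearly_singular_general hk P f hf μ Z hZmeas hZlaw hindep hσ n

end
end
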